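/- Let δ > 0, t ∈ ℝ, ξ ~ U([0, δ]), and a, a' ∈ ℝ. Then E_ξ (d^t(a + ξ, a' + ξ))² ≥ (max(|a - a'| - 4|t|, 0))² and E_ξ (d^t(a + ξ, a' + ξ))² ≤ (|a - a'| + 4(δ + |t|)) · (|a - a'| + 4|t|). -/

import Mathlib

open MeasureTheory

/-- The set `S^t` of pairs separated by the softened threshold at 0. -/
def Ssoft (t : ℝ) : Set (ℝ × ℝ) :=
  {p | p.1 < -t ∧ t < p.2} ∪ {p | t < p.1 ∧ p.2 < -t}

/-- Softened quantized distance `d^t` of resolution `δ`. -/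
noncomputable def dsoft (δ t a a' : ℝ) : ℝ :=
  δ * ∑' k : ℤ, Set.indicator (Ssoft t) (fun _ => (1 : ℝ)) (a - k * δ, a' - k * δ)

/-- Uniform probability measure on `[0, δ]`. -/
noncomputable def unif (δ : ℝ) : Measure ℝ :=
  (ENNReal.ofReal δ)⁻¹ • volume.restrict (Set.Icc 0 δ)

lemma mem_Ssoft_iff (δ t a a' : ℝ) (hδ : 0 < δ) (h : a ≤ a') (k : ℤ) :
    (a - k * δ, a' - k * δ) ∈ Ssoft t ↔
      (⌊(a + t) / δ⌋ < k ∧ k < ⌈(a' - t) / δ⌉) := by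
  have h1 : (a - k * δ, a' - k * δ) ∈ Ssoft t ↔ (a + t < k * δ ∧ (k : ℝ) * δ < a' - t) := by
    constructor
    · rintro (⟨h1, h2⟩ | ⟨h1, h2⟩) <;> constructor <;> simp at h1 h2 <;> nlinarith
    · rintro ⟨h1, h2⟩; left; constructor <;> simp <;> nlinarith
  rw [h1, Int.floor_lt, Int.lt_ceil, div_lt_iff₀ hδ, lt_div_iff₀ hδ]

lemma dsoft_eq (δ t a a' : ℝ) (hδ : 0 < δ) (h : a ≤ a') :
    dsoft δ t a a' = δ * ((Finset.Ioo ⌊(a + t) / δ⌋ ⌈(a' - t) / δ⌉).card : ℝ) := by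
  unfold dsoft
  congr 1
  have hf : ∀ k : ℤ, Set.indicator (Ssoft t) (fun _ => (1 : ℝ)) (a - k * δ, a' - k * δ)
      = if k ∈ Finset.Ioo ⌊(a + t) / δ⌋ ⌈(a' - t) / δ⌉ then 1 else 0 := by
    intro k
    classical
    rw [Set.indicator_apply]
    simp only [Finset.mem_Ioo, mem_Ssoft_iff δ t a a' hδ h k]
  rw [tsum_congr hf, tsum_eq_sum (s := Finset.Ioo ⌊(a + t) / δ⌋ ⌈(a' - t) / δ⌉)
    (by intro k hk; simp [hk])]
  rw [Finset.sum_congr rfl (fun k hk => if_pos hk), Finset.sum_const, nsmul_eq_mul, mul_one]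

lemma dsoft_symm (δ t a a' : ℝ) : dsoft δ t a a' = dsoft δ t a' a := by
  unfold dsoft
  congr 1
  apply tsum_congr
  intro k
  classical
  rw [Set.indicator_apply, Set.indicator_apply]
  have hiff : ((a - k * δ, a' - k * δ) ∈ Ssoft t) ↔ ((a' - k * δ, a - k * δ) ∈ Ssoft t) := by
    simp only [Ssoft, Set.mem_union, Set.mem_setOf_eq]; tauto
  rw [if_congr hiff rfl rfl]

lemma fract_comp_intervalIntegrable (δ c : ℝ) :
    IntervalIntegrable (fun ξ : ℝ => Int.fract ((c + ξ) / δ)) volume 0 δ := by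
  apply IntervalIntegrable.mono_fun' (g := fun _ => (1 : ℝ))
  · exact intervalIntegrable_const
  · exact (measurable_fract.comp
      ((measurable_id.const_add c).div_const δ)).aestronglyMeasurable
  · filter_upwards with x
    rw [Real.norm_eq_abs, abs_of_nonneg (Int.fract_nonneg _)]
    exact le_of_lt (Int.fract_lt_one _)

lemma integral_fract_unit : ∫ x in (0:ℝ)..1, Int.fract x = 1 / 2 := by
  have hae : ∀ᵐ x : ℝ, x ≠ 1 := by
    rw [ae_iff]
    have : {x : ℝ | ¬x ≠ 1} = {1} := by ext x; simp
    rw [this, Real.volume_singleton]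
  have : ∫ x in (0:ℝ)..1, Int.fract x = ∫ x in (0:ℝ)..1, x := by
    apply intervalIntegral.integral_congr_ae
    filter_upwards [hae] with x hx hmem
    rw [Set.uIoc_of_le (by norm_num : (0:ℝ) ≤ 1), Set.mem_Ioc] at hmem
    exact Int.fract_eq_self.2 ⟨hmem.1.le, lt_of_le_of_ne hmem.2 hx⟩
  rw [this, integral_id]
  norm_num

lemma integral_floor_aux (δ c : ℝ) (hδ : 0 < δ) :
    ∫ ξ in (0:ℝ)..δ, ((⌊(c + ξ) / δ⌋ : ℝ)) = c := by
  have hfl : ∀ ξ : ℝ, ((⌊(c + ξ) / δ⌋ : ℝ)) = (c + ξ) / δ - Int.fract ((c + ξ) / δ) := by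
    intro ξ; rw [Int.fract]; ring
  simp_rw [hfl]
  have hper : Function.Periodic (fun y : ℝ => Int.fract (y / δ)) δ := by
    intro y
    simp only []
    rw [add_div, div_self hδ.ne', Int.fract_add_one]
  have hint1 : IntervalIntegrable (fun ξ : ℝ => (c + ξ) / δ) volume 0 δ := by
    apply Continuous.intervalIntegrable; continuity
  have hint2 := fract_comp_intervalIntegrable δ c
  rw [intervalIntegral.integral_sub hint1 hint2]
  have h1 : ∫ ξ in (0:ℝ)..δ, (c + ξ) / δ = c + δ / 2 := by
    simp_rw [div_eq_mul_inv]
    rw [intervalIntegral.integral_mul_const, intervalIntegral.integral_add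
      intervalIntegrable_const (by apply Continuous.intervalIntegrable; continuity),
      intervalIntegral.integral_const, integral_id]
    field_simp
    ring
  have h2 : ∫ ξ in (0:ℝ)..δ, Int.fract ((c + ξ) / δ) = δ / 2 := by
    have := intervalIntegral.integral_comp_add_left (a := 0) (b := δ)
      (fun y : ℝ => Int.fract (y / δ)) c
    simp only [add_zero] at this
    rw [this]
    have heq := hper.intervalIntegral_add_eq c 0
    simp only [zero_add] at heq
    rw [heq]
    have hcomp := intervalIntegral.integral_comp_div (a := (0:ℝ)) (b := δ)
      (c := δ) (f := Int.fract) hδ.ne'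
    rw [hcomp, zero_div, div_self hδ.ne', integral_fract_unit]
    simp; ring
  rw [h1, h2]; ring

lemma floor_comp_monotone (δ c : ℝ) (hδ : 0 < δ) :
    Monotone (fun ξ : ℝ => (⌊(c + ξ) / δ⌋ : ℝ)) := by
  intro x y hxy
  simp only [Int.cast_le]
  exact Int.floor_le_floor (div_le_div_of_nonneg_right (by linarith) hδ.le)

lemma ceil_comp_monotone (δ c : ℝ) (hδ : 0 < δ) :
    Monotone (fun ξ : ℝ => (⌈(c + ξ) / δ⌉ : ℝ)) := by
  intro x y hxy
  simp only [Int.cast_le]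
  exact Int.ceil_le_ceil (div_le_div_of_nonneg_right (by linarith) hδ.le)

lemma integral_ceil_aux (δ c : ℝ) (hδ : 0 < δ) :
    ∫ ξ in (0:ℝ)..δ, ((⌈(c + ξ) / δ⌉ : ℝ)) = c + δ := by
  have hae : ∀ᵐ ξ : ℝ, ((⌈(c + ξ) / δ⌉ : ℝ)) = (⌊(c + ξ) / δ⌋ : ℝ) + 1 := by
    have hS : Set.Countable {ξ : ℝ | ∃ k : ℤ, (c + ξ) / δ = (k : ℝ)} := by
      apply Set.Countable.mono _ (Set.countable_range (fun k : ℤ => (k : ℝ) * δ - c))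
      rintro ξ ⟨k, hk⟩
      exact ⟨k, by show (k:ℝ) * δ - c = ξ; field_simp at hk; linarith⟩
    rw [ae_iff]
    apply measure_mono_null _ (hS.measure_zero volume)
    intro ξ hξ
    simp only [Set.mem_setOf_eq] at hξ ⊢
    by_contra hne
    apply hξ
    set z := (c + ξ) / δ
    have h1 : ⌈z⌉ ≤ ⌊z⌋ + 1 := Int.ceil_le_floor_add_one z
    have h2 : ⌊z⌋ < ⌈z⌉ := by
      apply Int.lt_ceil.2
      rcases lt_or_eq_of_le (Int.floor_le z) with h | h
      · exact h
      · exact absurd ⟨⌊z⌋, h.symm⟩ hne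
    have : (⌈z⌉ : ℤ) = ⌊z⌋ + 1 := le_antisymm h1 h2
    push_cast [this]
    ring
  calc ∫ ξ in (0:ℝ)..δ, ((⌈(c + ξ) / δ⌉ : ℝ))
      = ∫ ξ in (0:ℝ)..δ, ((⌊(c + ξ) / δ⌋ : ℝ) + 1) := by
        apply intervalIntegral.integral_congr_ae
        filter_upwards [hae] with ξ h _; exact h
    _ = (∫ ξ in (0:ℝ)..δ, ((⌊(c + ξ) / δ⌋ : ℝ))) + ∫ ξ in (0:ℝ)..δ, (1:ℝ) := by
        exact intervalIntegral.integral_add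
          ((floor_comp_monotone δ c hδ).intervalIntegrable) intervalIntegrable_const
    _ = c + δ := by rw [integral_floor_aux δ c hδ]; simp

lemma unif_integral (δ : ℝ) (hδ : 0 < δ) (f : ℝ → ℝ) :
    ∫ ξ, f ξ ∂(unif δ) = δ⁻¹ * ∫ ξ in (0:ℝ)..δ, f ξ := by
  rw [unif, integral_smul_measure, intervalIntegral.integral_of_le hδ.le,
    ← integral_Icc_eq_integral_Ioc, ENNReal.toReal_inv, ENNReal.toReal_ofReal hδ.le,
    smul_eq_mul]

lemma unif_prob (δ : ℝ) (hδ : 0 < δ) : IsProbabilityMeasure (unif δ) := by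
  constructor
  rw [unif, Measure.smul_apply, Measure.restrict_apply_univ, Real.volume_Icc, sub_zero,
    smul_eq_mul]
  exact ENNReal.inv_mul_cancel (by simp [hδ]) ENNReal.ofReal_ne_top

lemma integrable_unif {δ : ℝ} (hδ : 0 < δ) {f : ℝ → ℝ} (hm : Measurable f) (C : ℝ)
    (hb : ∀ ξ, |f ξ| ≤ C) : Integrable f (unif δ) := by
  rw [unif]
  haveI : IsFiniteMeasure (volume.restrict (Set.Icc (0:ℝ) δ)) :=
    ⟨by rw [Measure.restrict_apply_univ]; exact measure_Icc_lt_top⟩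
  apply Integrable.smul_measure _ (ENNReal.inv_ne_top.2 (by simp [hδ]))
  apply Integrable.mono' (integrable_const C) hm.aestronglyMeasurable
  filter_upwards with ξ
  exact hb ξ

lemma stmt9_aux (δ t a a' : ℝ) (hδ : 0 < δ) (h : a ≤ a') :
    (max (|a - a'| - 4 * |t|) 0) ^ 2 ≤ ∫ ξ, (dsoft δ t (a + ξ) (a' + ξ)) ^ 2 ∂(unif δ) ∧
    (∫ ξ, (dsoft δ t (a + ξ) (a' + ξ)) ^ 2 ∂(unif δ)) ≤
      (|a - a'| + 4 * (δ + |t|)) * (|a - a'| + 4 * |t|) := by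
  set u : ℝ := a + t with hu
  set v : ℝ := a' - t with hv
  have habs : |a - a'| = a' - a := by rw [abs_sub_comm]; exact abs_of_nonneg (by linarith)
  have hta : t ≤ |t| := le_abs_self t
  have htb : -|t| ≤ t := neg_abs_le t
  have hform : ∀ ξ : ℝ, dsoft δ t (a + ξ) (a' + ξ)
      = δ * ((Finset.Ioo ⌊(u + ξ) / δ⌋ ⌈(v + ξ) / δ⌉).card : ℝ) := by
    intro ξ
    rw [dsoft_eq δ t (a + ξ) (a' + ξ) hδ (by linarith),
      show a + ξ + t = u + ξ from by rw [hu]; ring,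
      show a' + ξ - t = v + ξ from by rw [hv]; ring]
  rcases le_or_gt v u with hvu | huv
  · -- degenerate case : dsoft vanishes
    have hzero : ∀ ξ : ℝ, dsoft δ t (a + ξ) (a' + ξ) = 0 := by
      intro ξ
      rw [hform ξ]
      have hcard : (Finset.Ioo ⌊(u + ξ) / δ⌋ ⌈(v + ξ) / δ⌉).card = 0 := by
        rw [Int.card_Ioo]
        have h1 : ⌈(v + ξ) / δ⌉ ≤ ⌊(u + ξ) / δ⌋ + 1 :=
          le_trans (Int.ceil_le_ceil (div_le_div_of_nonneg_right (by linarith) hδ.le))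
            (Int.ceil_le_floor_add_one _)
        omega
      rw [hcard]; simp
    simp only [hzero]
    have hint0 : ∫ ξ, (0:ℝ) ^ 2 ∂(unif δ) = 0 := by simp
    rw [hint0]
    have ht0 : 0 ≤ t := by rw [hu, hv] at hvu; linarith
    constructor
    · rw [habs, abs_of_nonneg ht0, max_eq_right (by rw [hu, hv] at hvu; linarith)]
      norm_num
    · positivity
  · -- main case
    set G : ℝ → ℝ := fun ξ => δ * ((⌈(v + ξ) / δ⌉ : ℝ) - (⌊(u + ξ) / δ⌋ : ℝ) - 1) with hGdef
    have hlt : ∀ ξ : ℝ, ⌊(u + ξ) / δ⌋ < ⌈(v + ξ) / δ⌉ := by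
      intro ξ
      apply Int.lt_ceil.2
      apply lt_of_le_of_lt (Int.floor_le _)
      exact div_lt_div_of_pos_right (by linarith) hδ
    have hFG : ∀ ξ : ℝ, dsoft δ t (a + ξ) (a' + ξ) = G ξ := by
      intro ξ
      rw [hform ξ, hGdef]
      congr 1
      have hnn : (0:ℤ) ≤ ⌈(v + ξ) / δ⌉ - ⌊(u + ξ) / δ⌋ - 1 := by have := hlt ξ; omega
      rw [Int.card_Ioo]
      have hcast : (((⌈(v + ξ) / δ⌉ - ⌊(u + ξ) / δ⌋ - 1).toNat : ℕ) : ℝ)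
          = ((⌈(v + ξ) / δ⌉ : ℝ)) - ((⌊(u + ξ) / δ⌋ : ℝ)) - 1 := by
        have := Int.toNat_of_nonneg hnn
        exact_mod_cast congrArg (fun z : ℤ => (z : ℝ)) this
      rw [hcast]
    have hG0 : ∀ ξ : ℝ, 0 ≤ G ξ := by
      intro ξ
      apply mul_nonneg hδ.le
      have : ((⌊(u + ξ) / δ⌋ : ℝ)) + 1 ≤ ((⌈(v + ξ) / δ⌉ : ℝ)) := by
        exact_mod_cast hlt ξ
      linarith
    have hGle : ∀ ξ : ℝ, G ξ ≤ (v - u) + δ := by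
      intro ξ
      have h1 : ((⌈(v + ξ) / δ⌉ : ℝ)) < (v + ξ) / δ + 1 := Int.ceil_lt_add_one _
      have h2 : (u + ξ) / δ - 1 < ((⌊(u + ξ) / δ⌋ : ℝ)) := Int.sub_one_lt_floor _
      have h3 : (v + ξ) / δ - (u + ξ) / δ = (v - u) / δ := by ring
      have key : ((⌈(v + ξ) / δ⌉ : ℝ)) - ((⌊(u + ξ) / δ⌋ : ℝ)) - 1 ≤ (v - u) / δ + 1 := by
        linarith
      calc G ξ ≤ δ * ((v - u) / δ + 1) := mul_le_mul_of_nonneg_left key hδ.le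
        _ = (v - u) + δ := by field_simp
    have hGm : Measurable G := by
      have hc : Measurable fun x : ℝ => ((⌈(v + x) / δ⌉ : ℝ)) :=
        Measurable.comp measurable_from_top
          (Measurable.ceil ((measurable_id.const_add v).div_const δ))
      have hfm : Measurable fun x : ℝ => ((⌊(u + x) / δ⌋ : ℝ)) :=
        Measurable.comp measurable_from_top
          (Measurable.floor ((measurable_id.const_add u).div_const δ))
      exact Measurable.const_mul ((hc.sub hfm).sub measurable_const) δ
    have hi1 : Integrable G (unif δ) :=
      integrable_unif hδ hGm ((v - u) + δ)
        (fun ξ => by rw [abs_of_nonneg (hG0 ξ)]; exact hGle ξ)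
    have hi2 : Integrable (fun ξ => G ξ ^ 2) (unif δ) := by
      apply integrable_unif hδ (hGm.pow_const 2) (((v - u) + δ) ^ 2)
      intro ξ
      rw [abs_of_nonneg (sq_nonneg _)]
      exact pow_le_pow_left₀ (hG0 ξ) (hGle ξ) 2
    have hmean : ∫ ξ, G ξ ∂(unif δ) = v - u := by
      rw [unif_integral δ hδ]
      have hGi : ∫ ξ in (0:ℝ)..δ, G ξ = δ * (v - u) := by
        rw [hGdef]
        rw [intervalIntegral.integral_const_mul]
        have hsplit : ∫ ξ in (0:ℝ)..δ, (((⌈(v + ξ) / δ⌉ : ℝ)) - ((⌊(u + ξ) / δ⌋ : ℝ)) - 1)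
            = (∫ ξ in (0:ℝ)..δ, ((⌈(v + ξ) / δ⌉ : ℝ)))
              - (∫ ξ in (0:ℝ)..δ, ((⌊(u + ξ) / δ⌋ : ℝ))) - ∫ ξ in (0:ℝ)..δ, (1:ℝ) := by
          rw [intervalIntegral.integral_sub, intervalIntegral.integral_sub]
          · exact (ceil_comp_monotone δ v hδ).intervalIntegrable
          · exact (floor_comp_monotone δ u hδ).intervalIntegrable
          · exact IntervalIntegrable.sub ((ceil_comp_monotone δ v hδ).intervalIntegrable)
              ((floor_comp_monotone δ u hδ).intervalIntegrable)
          · exact intervalIntegrable_const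
        rw [hsplit, integral_ceil_aux δ v hδ, integral_floor_aux δ u hδ,
          intervalIntegral.integral_const, smul_eq_mul, mul_one, sub_zero]
        ring
      rw [hGi]
      field_simp
    haveI hprob : IsProbabilityMeasure (unif δ) := unif_prob δ hδ
    have hlow : (v - u) ^ 2 ≤ ∫ ξ, G ξ ^ 2 ∂(unif δ) := by
      have h0 : 0 ≤ ∫ ξ, (G ξ - (v - u)) ^ 2 ∂(unif δ) :=
        integral_nonneg (fun ξ => sq_nonneg _)
      have hexp : ∫ ξ, (G ξ - (v - u)) ^ 2 ∂(unif δ)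
          = (∫ ξ, G ξ ^ 2 ∂(unif δ)) - 2 * (v - u) * (v - u) + (v - u) ^ 2 := by
        have hia : Integrable (fun ξ => G ξ ^ 2 - 2 * (v - u) * G ξ) (unif δ) := by
          exact hi2.sub (hi1.const_mul (2 * (v - u)))
        have hib : Integrable (fun ξ => 2 * (v - u) * G ξ) (unif δ) := hi1.const_mul _
        calc ∫ ξ, (G ξ - (v - u)) ^ 2 ∂(unif δ)
            = ∫ ξ, ((G ξ ^ 2 - 2 * (v - u) * G ξ) + (v - u) ^ 2) ∂(unif δ) := by
              congr 1; funext ξ; ring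
          _ = (∫ ξ, (G ξ ^ 2 - 2 * (v - u) * G ξ) ∂(unif δ)) + (v - u) ^ 2 := by
              rw [integral_add hia (integrable_const _), integral_const]
              simp [measure_univ]
          _ = (∫ ξ, G ξ ^ 2 ∂(unif δ)) - 2 * (v - u) * (v - u) + (v - u) ^ 2 := by
              rw [integral_sub hi2 hib, integral_const_mul, hmean]
      linarith
    have hup : ∫ ξ, G ξ ^ 2 ∂(unif δ) ≤ ((v - u) + δ) * (v - u) := by
      have hmono : ∫ ξ, G ξ ^ 2 ∂(unif δ) ≤ ∫ ξ, ((v - u) + δ) * G ξ ∂(unif δ) := by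
        apply integral_mono hi2 (hi1.const_mul _)
        intro ξ
        show G ξ ^ 2 ≤ (v - u + δ) * G ξ
        have h1 := hGle ξ
        have h2 := hG0 ξ
        nlinarith
      rwa [integral_const_mul, hmean] at hmono
    have hvu' : 0 ≤ v - u := by linarith
    simp only [hFG]
    constructor
    · refine le_trans ?_ hlow
      apply pow_le_pow_left₀ (le_max_right _ _)
      apply max_le ?_ hvu'
      rw [habs, hu, hv]
      linarith
    · refine le_trans hup ?_
      apply mul_le_mul
      · rw [habs, hu, hv]; linarith
      · rw [habs, hu, hv]; linarith
      · exact hvu'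
      · rw [habs]; have := abs_nonneg t; linarith

/-- General bounds on the expected squared dithered softened distance. -/
theorem stmt9 (δ t a a' : ℝ) (hδ : 0 < δ) :
    (max (|a - a'| - 4 * |t|) 0) ^ 2 ≤ ∫ ξ, (dsoft δ t (a + ξ) (a' + ξ)) ^ 2 ∂(unif δ) ∧
    (∫ ξ, (dsoft δ t (a + ξ) (a' + ξ)) ^ 2 ∂(unif δ)) ≤
      (|a - a'| + 4 * (δ + |t|)) * (|a - a'| + 4 * |t|) := by
  rcases le_total a a' with h | h
  · exact stmt9_aux δ t a a' hδ h
  · have hsym : ∀ ξ : ℝ, dsoft δ t (a + ξ) (a' + ξ) = dsoft δ t (a' + ξ) (a + ξ) :=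
      fun ξ => dsoft_symm δ t (a + ξ) (a' + ξ)
    simp only [hsym, abs_sub_comm a a']
    exact stmt9_aux δ t a' a hδ h
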